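/- For any Z ⊆ X, φ ∈ C(X,ℝ), and θ ∈ (0,1], the lower and upper θ-intermediate topological pressures of the closure of Z equal those of Z: P̲(f, Z̄, φ, θ) = P̲(f, Z, φ, θ) and P̄(f, Z̄, φ, θ) = P̄(f, Z, φ, θ). -/

import Mathlib

open Filter Topology Set ENNReal NNReal MeasureTheory

namespace NDSPressure

variable {X : Type*} [MetricSpace X]

/-- `traj f j = f_j ∘ ⋯ ∘ f_1` (with `traj f 0 = id`), the time-`j` map of the
nonautonomous system `f = {f_i}_{i ≥ 1}`. -/
def traj (f : ℕ → X → X) : ℕ → X → X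
  | 0 => id
  | n + 1 => f (n + 1) ∘ traj f n

/-- The nonautonomous Birkhoff sum `S_n φ(x) = Σ_{j<n} φ(f_1^j x)`. -/
noncomputable def birkhoff (f : ℕ → X → X) (φ : X → ℝ) (n : ℕ) (x : X) : ℝ :=
  ∑ j ∈ Finset.range n, φ (traj f j x)

/-- The Bowen ball `B_n(x, δ)` for the nonautonomous system `f`. -/
def bowenBall (f : ℕ → X → X) (n : ℕ) (δ : ℝ) (x : X) : Set X :=
  {y | ∀ j < n, dist (traj f j x) (traj f j y) < δ}

/-- The Bowen metric `d_n(x,y) = max_{0 ≤ j ≤ n-1} d(f_1^j x, f_1^j y)`. -/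
noncomputable def dnDist (f : ℕ → X → X) (n : ℕ) (x y : X) : ℝ :=
  (((Finset.range n).sup fun j => nndist (traj f j x) (traj f j y) : ℝ≥0) : ℝ)

/-- Admissible string/ball lengths for the parameter `θ ∈ [0,1]`:
`N ≤ n` and `n < N/θ + 1` (no upper restriction when `θ = 0`). -/
def admissible (θ : ℝ) (N n : ℕ) : Prop :=
  N ≤ n ∧ (n : ℝ) * θ < N + θ

/-- Weight `exp(-α n + sup_{B_n(x,δ)} S_n φ)` of a Bowen ball, as an extended nonnegative real. -/
noncomputable def ballWeight (f : ℕ → X → X) (φ : X → ℝ) (α δ : ℝ) (p : X × ℕ) : ℝ≥0∞ :=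
  ENNReal.ofReal (Real.exp (-α * p.2 + sSup (birkhoff f φ p.2 '' bowenBall f p.2 δ p.1)))

/-- Weight `exp(-α n + S_n φ(x))` of a Bowen ball using the value at the center. -/
noncomputable def ballWeightC (f : ℕ → X → X) (φ : X → ℝ) (α : ℝ) (p : X × ℕ) : ℝ≥0∞ :=
  ENNReal.ofReal (Real.exp (-α * p.2 + birkhoff f φ p.2 p.1))

/-- The Carathéodory–Pesin set function `M(Z, α, φ, δ, N, θ)` defined via covers of `Z`
by Bowen balls of admissible lengths. -/
noncomputable def MBall (f : ℕ → X → X) (Z : Set X) (α : ℝ) (φ : X → ℝ) (δ : ℝ)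
    (N : ℕ) (θ : ℝ) : ℝ≥0∞ :=
  ⨅ (S : Set (X × ℕ)) (_ : S.Countable) (_ : ∀ p ∈ S, admissible θ N p.2)
    (_ : Z ⊆ ⋃ p ∈ S, bowenBall f p.2 δ p.1),
      ∑' p : S, ballWeight f φ α δ (p : X × ℕ)

/-- Variant of `MBall` where Birkhoff sums are evaluated at the centers of the balls. -/
noncomputable def MBallC (f : ℕ → X → X) (Z : Set X) (α : ℝ) (φ : X → ℝ) (δ : ℝ)
    (N : ℕ) (θ : ℝ) : ℝ≥0∞ :=
  ⨅ (S : Set (X × ℕ)) (_ : S.Countable) (_ : ∀ p ∈ S, admissible θ N p.2)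
    (_ : Z ⊆ ⋃ p ∈ S, bowenBall f p.2 δ p.1),
      ∑' p : S, ballWeightC f φ α (p : X × ℕ)

noncomputable def mLowerBall (f : ℕ → X → X) (Z : Set X) (α : ℝ) (φ : X → ℝ)
    (δ θ : ℝ) : ℝ≥0∞ :=
  liminf (fun N => MBall f Z α φ δ N θ) atTop

noncomputable def mUpperBall (f : ℕ → X → X) (Z : Set X) (α : ℝ) (φ : X → ℝ)
    (δ θ : ℝ) : ℝ≥0∞ :=
  limsup (fun N => MBall f Z α φ δ N θ) atTop

/-- Lower θ-intermediate topological pressure of `φ` on `Z` at scale `δ`. -/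
noncomputable def lowerPBall (f : ℕ → X → X) (Z : Set X) (φ : X → ℝ) (δ θ : ℝ) : ℝ :=
  sInf {α : ℝ | mLowerBall f Z α φ δ θ = 0}

/-- Upper θ-intermediate topological pressure of `φ` on `Z` at scale `δ`. -/
noncomputable def upperPBall (f : ℕ → X → X) (Z : Set X) (φ : X → ℝ) (δ θ : ℝ) : ℝ :=
  sInf {α : ℝ | mUpperBall f Z α φ δ θ = 0}

/-- Center variants of the pressures at scale `δ`. -/
noncomputable def lowerPBallC (f : ℕ → X → X) (Z : Set X) (φ : X → ℝ) (δ θ : ℝ) : ℝ :=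
  sInf {α : ℝ | liminf (fun N => MBallC f Z α φ δ N θ) atTop = 0}

noncomputable def upperPBallC (f : ℕ → X → X) (Z : Set X) (φ : X → ℝ) (δ θ : ℝ) : ℝ :=
  sInf {α : ℝ | limsup (fun N => MBallC f Z α φ δ N θ) atTop = 0}

/-- The lower θ-intermediate topological pressure `P̲(f, Z, φ, θ) = lim_{δ→0} P̲(f,Z,φ,δ,θ)`
(the limit exists; we take the `limsup` along `δ → 0⁺`, which equals it). -/
noncomputable def lowerP (f : ℕ → X → X) (Z : Set X) (φ : X → ℝ) (θ : ℝ) : ℝ :=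
  limsup (fun δ => lowerPBall f Z φ δ θ) (𝓝[>] (0 : ℝ))

/-- The upper θ-intermediate topological pressure `P̄(f, Z, φ, θ)`. -/
noncomputable def upperP (f : ℕ → X → X) (Z : Set X) (φ : X → ℝ) (θ : ℝ) : ℝ :=
  limsup (fun δ => upperPBall f Z φ δ θ) (𝓝[>] (0 : ℝ))

/-! ### String (open cover) version -/

/-- For a string `L = (U_0, …, U_{m-1})` of sets, the set
`X(L) = {x : f_1^j x ∈ U_j for all j < m}`. -/
def stringSet (f : ℕ → X → X) (L : List (Set X)) : Set X :=
  {x | ∀ j < L.length, traj f j x ∈ L.getD j ∅}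

/-- Weight of a string. -/
noncomputable def strWeight (f : ℕ → X → X) (φ : X → ℝ) (α : ℝ) (L : List (Set X)) : ℝ≥0∞ :=
  ENNReal.ofReal (Real.exp (-α * L.length + sSup (birkhoff f φ L.length '' stringSet f L)))

/-- The Carathéodory–Pesin set function defined via covers of `Z` by string sets coming
from the cover `𝒰`, with admissible string lengths. -/
noncomputable def MStr (f : ℕ → X → X) (Z : Set X) (α : ℝ) (φ : X → ℝ)
    (𝒰 : Finset (Set X)) (N : ℕ) (θ : ℝ) : ℝ≥0∞ :=
  ⨅ (G : Set (List (Set X))) (_ : G.Countable)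
    (_ : ∀ L ∈ G, (∀ U ∈ L, U ∈ 𝒰) ∧ admissible θ N L.length)
    (_ : Z ⊆ ⋃ L ∈ G, stringSet f L),
      ∑' L : G, strWeight f φ α (L : List (Set X))

/-- Lower θ-intermediate pressure relative to the open cover `𝒰`. -/
noncomputable def lowerPStr (f : ℕ → X → X) (Z : Set X) (φ : X → ℝ)
    (𝒰 : Finset (Set X)) (θ : ℝ) : ℝ :=
  sInf {α : ℝ | liminf (fun N => MStr f Z α φ 𝒰 N θ) atTop = 0}

/-- Upper θ-intermediate pressure relative to the open cover `𝒰`. -/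
noncomputable def upperPStr (f : ℕ → X → X) (Z : Set X) (φ : X → ℝ)
    (𝒰 : Finset (Set X)) (θ : ℝ) : ℝ :=
  sInf {α : ℝ | limsup (fun N => MStr f Z α φ 𝒰 N θ) atTop = 0}

/-- `𝒰` is a finite open cover of `X`. -/
def IsFinOpenCover (𝒰 : Finset (Set X)) : Prop :=
  (∀ U ∈ 𝒰, IsOpen U) ∧ ⋃₀ (𝒰 : Set (Set X)) = Set.univ

/-- The mesh `|𝒰|` of a cover: the maximal diameter of its elements. -/
noncomputable def coverDiam (𝒰 : Finset (Set X)) : ℝ :=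
  sSup (Metric.diam '' (𝒰 : Set (Set X)))

/-- The filter of finite open covers of vanishing mesh (`|𝒰| → 0`). -/
noncomputable def coverFilter (X : Type*) [MetricSpace X] :
    Filter {𝒰 : Finset (Set X) // IsFinOpenCover 𝒰} :=
  Filter.comap (fun 𝒰 => coverDiam 𝒰.1) (𝓝 (0 : ℝ))

/-- The open-cover definition of the lower θ-intermediate pressure:
`lim_{|𝒰|→0} P̲(f,Z,φ,𝒰,θ)` (as a `limsup` along the cover filter). -/
noncomputable def lowerPStrFull (f : ℕ → X → X) (Z : Set X) (φ : X → ℝ) (θ : ℝ) : ℝ :=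
  limsup (fun 𝒰 : {𝒰 : Finset (Set X) // IsFinOpenCover 𝒰} => lowerPStr f Z φ 𝒰.1 θ)
    (coverFilter X)

/-- The open-cover definition of the upper θ-intermediate pressure. -/
noncomputable def upperPStrFull (f : ℕ → X → X) (Z : Set X) (φ : X → ℝ) (θ : ℝ) : ℝ :=
  limsup (fun 𝒰 : {𝒰 : Finset (Set X) // IsFinOpenCover 𝒰} => upperPStr f Z φ 𝒰.1 θ)
    (coverFilter X)

/-! ### Measure-theoretic version -/

/-- `M_μ(f, α, φ, ε, N, θ)`: infimum over finite μ-covers by Bowen balls of admissible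
lengths of the total weight. -/
noncomputable def MMeas [MeasurableSpace X] (f : ℕ → X → X) (μ : Measure X) (α : ℝ)
    (φ : X → ℝ) (ε : ℝ) (N : ℕ) (θ : ℝ) : ℝ≥0∞ :=
  ⨅ (S : Finset (X × ℕ)) (_ : ∀ p ∈ S, admissible θ N p.2)
    (_ : μ (⋃ p ∈ S, bowenBall f p.2 ε p.1) = 1),
      ∑ p ∈ S, ballWeight f φ α ε p

noncomputable def lowerPMeasEps [MeasurableSpace X] (f : ℕ → X → X) (μ : Measure X)
    (φ : X → ℝ) (ε θ : ℝ) : ℝ :=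
  sInf {α : ℝ | liminf (fun N => MMeas f μ α φ ε N θ) atTop = 0}

noncomputable def upperPMeasEps [MeasurableSpace X] (f : ℕ → X → X) (μ : Measure X)
    (φ : X → ℝ) (ε θ : ℝ) : ℝ :=
  sInf {α : ℝ | limsup (fun N => MMeas f μ α φ ε N θ) atTop = 0}

/-- The lower θ-intermediate measure-theoretic pressure `P̲_μ(f, φ, θ)`. -/
noncomputable def lowerPMeas [MeasurableSpace X] (f : ℕ → X → X) (μ : Measure X)
    (φ : X → ℝ) (θ : ℝ) : ℝ :=
  limsup (fun ε => lowerPMeasEps f μ φ ε θ) (𝓝[>] (0 : ℝ))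

/-- The upper θ-intermediate measure-theoretic pressure `P̄_μ(f, φ, θ)`. -/
noncomputable def upperPMeas [MeasurableSpace X] (f : ℕ → X → X) (μ : Measure X)
    (φ : X → ℝ) (θ : ℝ) : ℝ :=
  limsup (fun ε => upperPMeasEps f μ φ ε θ) (𝓝[>] (0 : ℝ))

/-! ### Power system -/

/-- `compFrom f k n = f_{k+n} ∘ ⋯ ∘ f_{k+1}`. -/
def compFrom (f : ℕ → X → X) (k : ℕ) : ℕ → X → X
  | 0 => id
  | n + 1 => f (k + n + 1) ∘ compFrom f k n

/-- The `m`-th power system `f^m = {f_{(i-1)m+1}^{im}}_{i ≥ 1}`. -/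
def powerSeq (f : ℕ → X → X) (m : ℕ) : ℕ → X → X :=
  fun i => compFrom f ((i - 1) * m) m


end NDSPressure

/-! Since `θ > 0`, admissible lengths are at most `⌈N/θ⌉₊`, so by uniform continuity of the
finitely many maps `f_1^j` involved, a cover of `Z` by Bowen balls of radius `δ'` becomes a
cover of `Z̄` by the balls of radius `δ > δ'` with the same centres and lengths. Passing from
radius `δ'` to `δ` raises the supremum of `S_n φ` over a ball by at most `n ε`, where `ε` bounds
the oscillation of `φ` at scale `δ`. Hence `M(Z̄, α + ε, δ) ≤ M(Z, α, δ/2)`, i.e.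
`P(Z̄, δ) ≤ P(Z, δ/2) + ε`, while `P(Z, δ) ≤ P(Z̄, δ)` by monotonicity; letting `δ → 0` gives
the equality. -/

namespace NDSPressure

variable {X : Type*}

theorem sInf_eq_of_subset_of_add_mem {A B : Set ℝ} (hBA : B ⊆ A) (hA : BddBelow A)
    (hAB : ∀ ε > 0, ∀ a ∈ A, a + ε ∈ B) : sInf B = sInf A := by
  rcases A.eq_empty_or_nonempty with rfl | ⟨a, ha⟩
  · rw [subset_empty_iff.mp hBA]
  have hB : B.Nonempty := ⟨a + 1, hAB 1 one_pos a ha⟩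
  refine le_antisymm (le_of_forall_pos_le_add fun ε hε => ?_) (csInf_le_csInf hA hB hBA)
  have : sInf B - ε ≤ sInf A := le_csInf ⟨a, ha⟩ fun b hb => by
    linarith [csInf_le (hA.mono hBA) (hAB ε hε b hb)]
  linarith

theorem limsup_eq_of_le_of_le_comp_add {β : Type*} {L : Filter β} [L.NeBot] {u v : β → ℝ}
    {σ : β → β} {c : ℝ} (hσ : Tendsto σ L L) (hu : ∀ᶠ x in L, c ≤ u x) (huv : u ≤ᶠ[L] v)
    (hvu : ∀ ε > 0, ∀ᶠ x in L, v x ≤ u (σ x) + ε) : limsup v L = limsup u L := by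
  simp only [limsup_eq]
  refine sInf_eq_of_subset_of_add_mem (fun a ha => ?_) ⟨c, fun a ha => ?_⟩ fun ε hε a ha => ?_
  · filter_upwards [huv, ha] with x h1 h2 using h1.trans h2
  · obtain ⟨x, h1, h2⟩ := (hu.and ha).exists
    exact h1.trans h2
  · filter_upwards [hvu ε hε, hσ.eventually ha] with x h1 h2
    linarith

theorem limsup_sInf_eq_of_add_mem {A₁ A₂ : ℝ → Set ℝ} {c : ℝ} (hsub : ∀ δ, A₂ δ ⊆ A₁ δ)
    (hlb : ∀ δ, ∀ α ∈ A₁ δ, c ≤ α)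
    (hshift : ∀ ε > 0, ∀ᶠ δ in 𝓝[>] (0 : ℝ), ∀ δ' ∈ Ioo 0 δ, ∀ α ∈ A₁ δ', α + ε ∈ A₂ δ) :
    limsup (fun δ => sInf (A₂ δ)) (𝓝[>] 0) = limsup (fun δ => sInf (A₁ δ)) (𝓝[>] 0) := by
  have hbdd : ∀ δ, BddBelow (A₁ δ) := fun δ => ⟨c, hlb δ⟩
  by_cases hE : ∃ᶠ δ in 𝓝[>] (0 : ℝ), A₂ δ = ∅
  · -- then both families are empty near `0`, and both infima are the junk value `sInf ∅ = 0`
    obtain ⟨δ₀, ⟨hshift₀, hpos⟩, hempty⟩ :=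
      ((hshift 1 one_pos).and self_mem_nhdsWithin).and_frequently hE |>.exists
    have hA₁ : ∀ δ ∈ Ioo 0 δ₀, A₁ δ = ∅ := fun δ hδ =>
      eq_empty_of_forall_notMem fun α hα => by simpa [hempty] using hshift₀ δ hδ α hα
    refine limsup_congr (mem_of_superset (Ioo_mem_nhdsGT hpos) fun δ hδ => ?_)
    simp [hA₁ δ hδ, subset_empty_iff.mp ((hA₁ δ hδ) ▸ hsub δ)]
  have hne : ∀ᶠ δ in 𝓝[>] (0 : ℝ), (A₂ δ).Nonempty :=
    (not_frequently.mp hE).mono fun δ h => nonempty_iff_ne_empty.mpr h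
  have hhalf : Tendsto (2⁻¹ * ·) (𝓝[>] (0 : ℝ)) (𝓝[>] 0) := by
    simpa only [comap_mulLeft_nhdsGT_zero (by norm_num : (0 : ℝ) < 2⁻¹)] using
      tendsto_comap (f := (2⁻¹ * · : ℝ → ℝ)) (x := 𝓝[>] 0)
  refine limsup_eq_of_le_of_le_comp_add hhalf (c := c) ?_ ?_ fun ε hε => ?_
  · filter_upwards [hne] with δ h using le_csInf (h.mono (hsub δ)) (hlb δ)
  · filter_upwards [hne] with δ h using csInf_le_csInf (hbdd δ) h (hsub δ)
  filter_upwards [hshift ε hε, hhalf.eventually hne, self_mem_nhdsWithin]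
    with δ hδ hne' (hpos : 0 < δ)
  have : sInf (A₂ δ) - ε ≤ sInf (A₁ (2⁻¹ * δ)) := le_csInf (hne'.mono (hsub _)) fun α hα => by
    linarith [csInf_le ((hbdd δ).mono (hsub δ))
      (hδ (2⁻¹ * δ) ⟨by positivity, by linarith⟩ α hα)]
  linarith

theorem admissible.le_ceil {θ : ℝ} (hθ : 0 < θ) {N n : ℕ} (h : admissible θ N n) :
    n ≤ ⌈(N : ℝ) / θ⌉₊ := by
  have h₁ : (n : ℝ) - 1 < N / θ := by
    rw [lt_div_iff₀ hθ, sub_mul, one_mul]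
    linarith [h.2]
  have h₂ : (n : ℝ) < ⌈(N : ℝ) / θ⌉₊ + 1 := by linarith [Nat.le_ceil ((N : ℝ) / θ)]
  exact Nat.lt_add_one_iff.mp (by exact_mod_cast h₂)

theorem continuous_traj [TopologicalSpace X] {f : ℕ → X → X} (hf : ∀ i, Continuous (f i)) :
    ∀ j, Continuous (traj f j)
  | 0 => continuous_id
  | j + 1 => (hf (j + 1)).comp (continuous_traj hf j)

theorem birkhoff_le_mul {f : ℕ → X → X} {φ : X → ℝ} {M : ℝ} (hM : ∀ x, φ x ≤ M) (n : ℕ)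
    (x : X) : birkhoff f φ n x ≤ n * M := by
  simpa [birkhoff] using Finset.sum_le_card_nsmul (Finset.range n) _ M fun j _ => hM (traj f j x)

theorem mul_le_birkhoff {f : ℕ → X → X} {φ : X → ℝ} {c : ℝ} (hc : ∀ x, c ≤ φ x) (n : ℕ)
    (x : X) : n * c ≤ birkhoff f φ n x := by
  simpa [birkhoff] using Finset.card_nsmul_le_sum (Finset.range n) _ c fun j _ => hc (traj f j x)

theorem bddAbove_birkhoff_image (f : ℕ → X → X) {φ : X → ℝ} (hφ : BddAbove (range φ))
    (n : ℕ) (A : Set X) : BddAbove (birkhoff f φ n '' A) := by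
  obtain ⟨M, hM⟩ := hφ
  exact ⟨n * M, forall_mem_image.2 fun x _ => birkhoff_le_mul (fun y => hM ⟨y, rfl⟩) n x⟩

section Metric

variable [MetricSpace X]

theorem exists_pos_forall_dist_traj_lt [CompactSpace X] {f : ℕ → X → X}
    (hf : ∀ i, Continuous (f i)) (M : ℕ) {ε : ℝ} (hε : 0 < ε) :
    ∃ η > 0, ∀ x y, dist x y < η → ∀ j ≤ M, dist (traj f j x) (traj f j y) < ε := by
  let F : X → (Fin (M + 1) → X) := fun x j => traj f j x
  have hF : UniformContinuous F := CompactSpace.uniformContinuous_of_continuous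
    (continuous_pi fun j => continuous_traj hf j)
  obtain ⟨η, hη, hFη⟩ := Metric.uniformContinuous_iff.mp hF ε hε
  exact ⟨η, hη, fun x y hxy j hj =>
    (dist_le_pi_dist (F x) (F y) ⟨j, Nat.lt_succ_of_le hj⟩).trans_lt (hFη hxy)⟩

theorem closure_subset_iUnion_bowenBall [CompactSpace X] {f : ℕ → X → X}
    (hf : ∀ i, Continuous (f i)) {Z : Set X} {S : Set (X × ℕ)} {M : ℕ} {δ' δ : ℝ}
    (hδ : δ' < δ) (hS : ∀ p ∈ S, p.2 ≤ M) (hcov : Z ⊆ ⋃ p ∈ S, bowenBall f p.2 δ' p.1) :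
    closure Z ⊆ ⋃ p ∈ S, bowenBall f p.2 δ p.1 := by
  obtain ⟨η, hη, hηtraj⟩ := exists_pos_forall_dist_traj_lt hf M (sub_pos.mpr hδ)
  intro y hy
  obtain ⟨z, hz, hyz⟩ := Metric.mem_closure_iff.mp hy η hη
  obtain ⟨p, hpS, hzp⟩ := mem_iUnion₂.mp (hcov hz)
  refine mem_iUnion₂.mpr ⟨p, hpS, fun j hj => ?_⟩
  calc dist (traj f j p.1) (traj f j y)
      ≤ dist (traj f j p.1) (traj f j z) + dist (traj f j z) (traj f j y) := dist_triangle _ _ _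
    _ < δ' + (δ - δ') :=
        add_lt_add (hzp j hj) (hηtraj z y (by rwa [dist_comm]) j (hj.le.trans (hS p hpS)))
    _ = δ := by ring

theorem mem_bowenBall_self (f : ℕ → X → X) (n : ℕ) {δ : ℝ} (hδ : 0 < δ) (x : X) :
    x ∈ bowenBall f n δ x := fun j _ => by simpa using hδ

theorem birkhoff_le_of_mem_bowenBall {f : ℕ → X → X} {φ : X → ℝ} {δ ε : ℝ}
    (hosc : ∀ u v, dist u v < δ → φ u ≤ φ v + ε) {n : ℕ} {x y : X}
    (hy : y ∈ bowenBall f n δ x) : birkhoff f φ n y ≤ birkhoff f φ n x + n * ε := by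
  calc birkhoff f φ n y ≤ ∑ j ∈ Finset.range n, (φ (traj f j x) + ε) :=
        Finset.sum_le_sum fun j hj => hosc _ _ (by rw [dist_comm]; exact hy j (by simpa using hj))
    _ = birkhoff f φ n x + n * ε := by simp [birkhoff, Finset.sum_add_distrib]

theorem ballWeight_add_le {f : ℕ → X → X} {φ : X → ℝ} (hφ : BddAbove (range φ))
    {δ' δ ε : ℝ} (hδ' : 0 < δ') (hδ : δ' < δ) (hosc : ∀ u v, dist u v < δ → φ u ≤ φ v + ε)
    (α : ℝ) (p : X × ℕ) : ballWeight f φ (α + ε) δ p ≤ ballWeight f φ α δ' p := by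
  obtain ⟨x, n⟩ := p
  refine ENNReal.ofReal_le_ofReal (Real.exp_le_exp.mpr ?_)
  have hsup : sSup (birkhoff f φ n '' bowenBall f n δ x) ≤ birkhoff f φ n x + n * ε :=
    csSup_le ⟨_, mem_image_of_mem _ (mem_bowenBall_self f n (hδ'.trans hδ) x)⟩
      (forall_mem_image.2 fun y hy => birkhoff_le_of_mem_bowenBall hosc hy)
  have hx : birkhoff f φ n x ≤ sSup (birkhoff f φ n '' bowenBall f n δ' x) :=
    le_csSup (bddAbove_birkhoff_image f hφ n _) (mem_image_of_mem _ (mem_bowenBall_self f n hδ' x))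
  dsimp only
  linarith

theorem MBall_mono (f : ℕ → X → X) {Z Z' : Set X} (h : Z ⊆ Z') (α : ℝ) (φ : X → ℝ) (δ : ℝ)
    (N : ℕ) (θ : ℝ) : MBall f Z α φ δ N θ ≤ MBall f Z' α φ δ N θ :=
  iInf_mono fun _ => iInf_mono fun _ => iInf_mono fun _ =>
    iInf_mono' fun hcov => ⟨h.trans hcov, le_rfl⟩

theorem one_le_MBall (f : ℕ → X → X) {Z : Set X} (hZ : Z.Nonempty) {φ : X → ℝ} {c α : ℝ}
    (hc : ∀ x, c ≤ φ x) (hφ : BddAbove (range φ)) (hα : α ≤ c) (δ : ℝ) (N : ℕ) (θ : ℝ) :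
    1 ≤ MBall f Z α φ δ N θ := by
  obtain ⟨z, hz⟩ := hZ
  refine le_iInf fun S => le_iInf fun _ => le_iInf fun _ => le_iInf fun hcov => ?_
  obtain ⟨p, hpS, hzp⟩ := mem_iUnion₂.mp (hcov hz)
  refine le_trans ?_ (ENNReal.le_tsum (⟨p, hpS⟩ : S))
  rw [ballWeight, ENNReal.one_le_ofReal]
  refine Real.one_le_exp ?_
  have hz_le := le_csSup (bddAbove_birkhoff_image f hφ p.2 _) (mem_image_of_mem _ hzp)
  nlinarith [mul_le_birkhoff (f := f) hc p.2 z, (Nat.cast_nonneg p.2 : (0 : ℝ) ≤ p.2)]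

theorem MBall_closure_add_le [CompactSpace X] {f : ℕ → X → X} (hf : ∀ i, Continuous (f i))
    (Z : Set X) {φ : X → ℝ} (hφ : BddAbove (range φ)) {δ' δ ε : ℝ} (hδ' : 0 < δ')
    (hδ : δ' < δ) (hosc : ∀ u v, dist u v < δ → φ u ≤ φ v + ε) (α : ℝ) (N : ℕ) {θ : ℝ}
    (hθ : 0 < θ) : MBall f (closure Z) (α + ε) φ δ N θ ≤ MBall f Z α φ δ' N θ := by
  refine le_iInf fun S => le_iInf fun hSc => le_iInf fun hSa => le_iInf fun hcov => ?_
  have hcov' := closure_subset_iUnion_bowenBall hf hδ (fun p hp => (hSa p hp).le_ceil hθ) hcov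
  calc MBall f (closure Z) (α + ε) φ δ N θ ≤ ∑' p : S, ballWeight f φ (α + ε) δ p :=
        iInf_le_of_le S (iInf_le_of_le hSc (iInf_le_of_le hSa (iInf_le_of_le hcov' le_rfl)))
    _ ≤ ∑' p : S, ballWeight f φ α δ' p :=
        ENNReal.tsum_le_tsum fun p => ballWeight_add_le hφ hδ' hδ hosc α p

theorem limsup_pressure_closure_eq [CompactSpace X] {f : ℕ → X → X}
    (hf : ∀ i, Continuous (f i)) (Z : Set X) (φ : C(X, ℝ)) {θ : ℝ} (hθ : 0 < θ)
    {L : (ℕ → ℝ≥0∞) → ℝ≥0∞} (hL : Monotone L) (hL1 : 1 ≤ L 1) :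
    limsup (fun δ => sInf {α | L (fun N => MBall f (closure Z) α φ δ N θ) = 0}) (𝓝[>] 0) =
      limsup (fun δ => sInf {α | L (fun N => MBall f Z α φ δ N θ) = 0}) (𝓝[>] 0) := by
  rcases Z.eq_empty_or_nonempty with rfl | hZ
  · rw [closure_empty]
  have hφ : BddAbove (range φ) := (isCompact_range φ.continuous).bddAbove
  obtain ⟨c, hc⟩ := (isCompact_range φ.continuous).bddBelow
  refine limsup_sInf_eq_of_add_mem (c := c) (fun δ α hα => ?_) (fun δ α hα => ?_)
    fun ε hε => ?_
  · exact le_antisymm ((hL fun N => MBall_mono f subset_closure α φ δ N θ).trans hα.le)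
      bot_le
  · by_contra! hαc
    have h1 := hL1.trans (hL fun N => one_le_MBall f hZ (fun x => hc ⟨x, rfl⟩) hφ hαc.le δ N θ)
    exact absurd (h1.trans_eq hα) (by norm_num)
  · obtain ⟨δ₀, hδ₀, hφδ₀⟩ := Metric.uniformContinuous_iff.mp
      (CompactSpace.uniformContinuous_of_continuous φ.continuous) ε hε
    have hosc : ∀ δ ≤ δ₀, ∀ u v : X, dist u v < δ → φ u ≤ φ v + ε := fun δ hδ u v huv => by
      linarith [abs_lt.mp (Real.dist_eq _ _ ▸ hφδ₀ (huv.trans_le hδ))]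
    filter_upwards [Ioo_mem_nhdsGT hδ₀] with δ hδ δ' hδ' α hα
    exact le_antisymm ((hL fun N => MBall_closure_add_le hf Z hφ hδ'.1 hδ'.2
      (hosc δ hδ.2.le) α N hθ).trans hα.le) bot_le

end Metric

theorem pressure_closure_eq_general {X : Type*} [MetricSpace X] [CompactSpace X]
    (f : ℕ → X → X) (hf : ∀ i, Continuous (f i))
    (Z : Set X) (φ : C(X, ℝ)) (θ : ℝ) (hθ0 : 0 < θ) :
    lowerP f (closure Z) (⇑φ) θ = lowerP f Z (⇑φ) θ ∧
    upperP f (closure Z) (⇑φ) θ = upperP f Z (⇑φ) θ :=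
  ⟨limsup_pressure_closure_eq hf Z φ hθ0 (L := fun u => liminf u atTop)
      (fun _ _ h => liminf_le_liminf (.of_forall h)) (by rw [Pi.one_def, liminf_const]),
    limsup_pressure_closure_eq hf Z φ hθ0 (L := fun u => limsup u atTop)
      (fun _ _ h => limsup_le_limsup (.of_forall h)) (by rw [Pi.one_def, limsup_const])⟩

/-- for `θ ∈ (0,1]` the θ-intermediate pressures of the closure of `Z`
equal those of `Z`. -/
theorem pressure_closure_eq {X : Type*} [MetricSpace X] [CompactSpace X]
    (f : ℕ → X → X) (hf : ∀ i, Continuous (f i))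
    (Z : Set X) (φ : C(X, ℝ)) (θ : ℝ) (hθ0 : 0 < θ) (hθ1 : θ ≤ 1) :
    lowerP f (closure Z) (⇑φ) θ = lowerP f Z (⇑φ) θ ∧
    upperP f (closure Z) (⇑φ) θ = upperP f Z (⇑φ) θ :=
  pressure_closure_eq_general f hf Z φ θ hθ0

end NDSPressure
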